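/- Let U, V be n×n unitary matrices, let r = (m_1,…,m_{d1}) and c = (n_1,…,n_{d2}) be partitions of n, partition the columns of U consecutively into blocks U_i with m_i columns and of V into blocks V_j with n_j columns, and set A = span{U_iU_i*}, B = span{V_jV_j*}. If the matrix Y(X;r,c) built from the block-index matrix X = (U*V)∘conj(U*V) contains an entry equal to 0 (equivalently, some (i,j) block of X has all entries summing to 0), then A and B are not quasiorthogonal. -/
import Mathlib


open Matrix

/-- Two subsets of `M_n(ℂ)` are *quasiorthogonal* if `Tr(AB) = Tr(A)Tr(B)/n` for all
`A ∈ 𝒜`, `B ∈ ℬ`. -/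
def Quasiorthogonal {n : ℕ} (𝒜 ℬ : Set (Matrix (Fin n) (Fin n) ℂ)) : Prop :=
  ∀ A ∈ 𝒜, ∀ B ∈ ℬ, (A * B).trace = A.trace * B.trace / (n : ℂ)

/-- The index in `Fin n` of column `b` of the `i`-th block, when the `n` columns are
partitioned consecutively into `d` blocks of sizes `m 0, m 1, …, m (d-1)`. -/
def colIdx {n d : ℕ} (m : Fin d → ℕ) (h : ∑ i, m i = n) (i : Fin d) (b : Fin (m i)) :
    Fin n := by
  refine ⟨(∑ j ∈ Finset.univ.filter (fun j => j < i), m j) + b.1, ?_⟩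
  have hb := b.2
  have hnotmem : i ∉ Finset.univ.filter (fun j => j < i) := by simp
  have hle : ∑ j ∈ insert i (Finset.univ.filter (fun j => j < i)), m j ≤ ∑ j, m j :=
    Finset.sum_le_sum_of_subset (Finset.subset_univ _)
  rw [Finset.sum_insert hnotmem] at hle
  omega

/-- `U_i`: the `n × m_i` submatrix of `U` consisting of the `i`-th consecutive block of
columns. -/
def colBlock {n d : ℕ} (U : Matrix (Fin n) (Fin n) ℂ) (m : Fin d → ℕ)
    (h : ∑ i, m i = n) (i : Fin d) : Matrix (Fin n) (Fin (m i)) ℂ :=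
  fun a b => U a (colIdx m h i b)

/-- `P_i = U_i U_i^*`. -/
noncomputable def blockProj {n d : ℕ} (U : Matrix (Fin n) (Fin n) ℂ) (m : Fin d → ℕ)
    (h : ∑ i, m i = n) (i : Fin d) : Matrix (Fin n) (Fin n) ℂ :=
  colBlock U m h i * (colBlock U m h i)ᴴ

lemma trace_blockProj {n d : ℕ} (U : Matrix (Fin n) (Fin n) ℂ)
    (hU : U ∈ Matrix.unitaryGroup (Fin n) ℂ) (m : Fin d → ℕ) (hm : ∑ i, m i = n)
    (i : Fin d) : (blockProj U m hm i).trace = (m i : ℂ) := by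
  have hUU : Uᴴ * U = 1 := hU.1
  unfold blockProj
  rw [Matrix.trace_mul_comm]
  have : ∀ a : Fin (m i), ((colBlock U m hm i)ᴴ * colBlock U m hm i) a a = 1 := by
    intro a
    have : ((colBlock U m hm i)ᴴ * colBlock U m hm i) a a
        = (Uᴴ * U) (colIdx m hm i a) (colIdx m hm i a) := by
      simp [Matrix.mul_apply, colBlock, Matrix.conjTranspose_apply]
    rw [this, hUU]
    simp
  simp [Matrix.trace, Matrix.diag, this]

lemma trace_blockProj_mul {n d1 d2 : ℕ} (U V : Matrix (Fin n) (Fin n) ℂ)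
    (m : Fin d1 → ℕ) (hm : ∑ i, m i = n) (c : Fin d2 → ℕ) (hc : ∑ j, c j = n)
    (i : Fin d1) (j : Fin d2) :
    (blockProj U m hm i * blockProj V c hc j).trace
      = ((∑ a : Fin (m i), ∑ b : Fin (c j),
          ‖(Uᴴ * V) (colIdx m hm i a) (colIdx c hc j b)‖ ^ 2 : ℝ) : ℂ) := by
  set W : Matrix (Fin (m i)) (Fin (c j)) ℂ := (colBlock U m hm i)ᴴ * colBlock V c hc j with hW
  have hWab : ∀ a b, W a b = (Uᴴ * V) (colIdx m hm i a) (colIdx c hc j b) := by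
    intro a b
    simp [hW, Matrix.mul_apply, colBlock, Matrix.conjTranspose_apply]
  have e1 : blockProj U m hm i * blockProj V c hc j
      = colBlock U m hm i * (W * (colBlock V c hc j)ᴴ) := by
    simp only [blockProj, hW, Matrix.mul_assoc]
  rw [e1, Matrix.trace_mul_comm]
  have e2 : W * (colBlock V c hc j)ᴴ * colBlock U m hm i = W * Wᴴ := by
    rw [hW, Matrix.conjTranspose_mul, Matrix.conjTranspose_conjTranspose, Matrix.mul_assoc]
  rw [e2]
  rw [Matrix.trace]
  push_cast
  refine Finset.sum_congr rfl fun a _ => ?_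
  rw [Matrix.diag_apply, Matrix.mul_apply]
  refine Finset.sum_congr rfl fun b _ => ?_
  rw [Matrix.conjTranspose_apply, hWab, Complex.star_def, Complex.mul_conj']

/-- If some entry of `Y(X;r,c)` is `0` (equivalently, the entries of
some `(i,j)` block of the block-index matrix `X = (U*V)∘conj(U*V)` sum to `0`), then the
commutative algebras `𝒜 = span {U_i U_i^*}` and `ℬ = span {V_j V_j^*}` are not
quasiorthogonal. -/
theorem not_quasiorthogonal_of_zero_block {n d1 d2 : ℕ}
    (U V : Matrix (Fin n) (Fin n) ℂ)
    (hU : U ∈ Matrix.unitaryGroup (Fin n) ℂ) (hV : V ∈ Matrix.unitaryGroup (Fin n) ℂ)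
    (m : Fin d1 → ℕ) (hm : ∑ i, m i = n) (hmpos : ∀ i, 0 < m i)
    (c : Fin d2 → ℕ) (hc : ∑ j, c j = n) (hcpos : ∀ j, 0 < c j)
    (hzero : ∃ (i : Fin d1) (j : Fin d2),
      ∑ a : Fin (m i), ∑ b : Fin (c j),
          ‖(Uᴴ * V) (colIdx m hm i a) (colIdx c hc j b)‖ ^ 2 = 0) :
    ¬ Quasiorthogonal
        (Submodule.span ℂ (Set.range (blockProj U m hm)) : Set (Matrix (Fin n) (Fin n) ℂ))
        (Submodule.span ℂ (Set.range (blockProj V c hc)) : Set (Matrix (Fin n) (Fin n) ℂ)) := by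
  obtain ⟨i, j, hz⟩ := hzero
  intro hq
  have hPmem : blockProj U m hm i ∈ Submodule.span ℂ (Set.range (blockProj U m hm)) :=
    Submodule.subset_span ⟨i, rfl⟩
  have hQmem : blockProj V c hc j ∈ Submodule.span ℂ (Set.range (blockProj V c hc)) :=
    Submodule.subset_span ⟨j, rfl⟩
  have h := hq _ hPmem _ hQmem
  rw [trace_blockProj_mul U V m hm c hc i j, hz,
    trace_blockProj U hU m hm i, trace_blockProj V hV c hc j] at h
  have hn : 0 < n := by
    have := hmpos i
    have hle : m i ≤ ∑ k, m k := Finset.single_le_sum (f := m) (fun _ _ => Nat.zero_le _)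
      (Finset.mem_univ i)
    omega
  have : ((m i : ℂ) * (c j : ℂ)) / (n : ℂ) ≠ 0 := by
    apply div_ne_zero
    · exact mul_ne_zero (by exact_mod_cast (hmpos i).ne') (by exact_mod_cast (hcpos j).ne')
    · exact_mod_cast hn.ne'
  exact this (by simpa using h.symm)
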